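/- Let $n \ge 1$, let $v_1,\dots,v_n$ be positive integers and $c_1,\dots,c_n$ be positive reals. If $\sum_{i=1}^n v_i \ge k_1$ for some real $k_1 > n$, and $\sum_{i=1}^n 1/c_i = k_2$, then $\sum_{i=1}^n c_i (v_i^2 - v_i) \ge (k_1 - n)^2/(2 k_2)$. -/
import Mathlib


theorem stmt_0 (n : ℕ) (hn : 1 ≤ n) (v : Fin n → ℕ) (hv : ∀ i, 1 ≤ v i)
    (c : Fin n → ℝ) (hc : ∀ i, 0 < c i) (k1 k2 : ℝ) (hk1 : (n : ℝ) < k1)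
    (hsum : k1 ≤ ∑ i, (v i : ℝ)) (hk2 : ∑ i, 1 / c i = k2) :
    (k1 - n) ^ 2 / (2 * k2) ≤ ∑ i, c i * ((v i : ℝ) ^ 2 - (v i : ℝ)) := by
  set w : Fin n → ℝ := fun i => (v i : ℝ) - 1 with hw
  have hwpos : ∀ i, 0 ≤ w i := fun i => by
    have := hv i; simp [hw]; exact_mod_cast this
  have hk2pos : 0 < k2 := by
    rw [← hk2]
    apply Finset.sum_pos
    · intro i _; exact one_div_pos.2 (hc i)
    · exact Finset.univ_nonempty_iff.2 (Fin.pos_iff_nonempty.1 hn)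
  -- Cauchy-Schwarz
  have hcs : (∑ i, w i) ^ 2 ≤ (∑ i, c i * w i ^ 2) * k2 := by
    have := Finset.sum_mul_sq_le_sq_mul_sq Finset.univ
      (fun i => Real.sqrt (c i) * w i) (fun i => 1 / Real.sqrt (c i))
    have h1 : ∀ i : Fin n, Real.sqrt (c i) * w i * (1 / Real.sqrt (c i)) = w i := by
      intro i
      have h0 : (0:ℝ) < Real.sqrt (c i) := Real.sqrt_pos.2 (hc i)
      field_simp
    have h2 : ∀ i : Fin n, (Real.sqrt (c i) * w i) ^ 2 = c i * w i ^ 2 := by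
      intro i
      rw [mul_pow, Real.sq_sqrt (hc i).le]
    have h3 : ∀ i : Fin n, (1 / Real.sqrt (c i)) ^ 2 = 1 / c i := by
      intro i
      rw [div_pow, one_pow, Real.sq_sqrt (hc i).le]
    simp only [h1, h2, h3] at this
    rwa [hk2] at this
  have hsw : k1 - n ≤ ∑ i, w i := by
    have : ∑ i, w i = (∑ i, (v i : ℝ)) - n := by
      simp [hw, Finset.sum_sub_distrib]
    rw [this]
    linarith
  have hsq : (k1 - n) ^ 2 ≤ (∑ i, w i) ^ 2 := by
    apply pow_le_pow_left₀ (by linarith) hsw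
  have hmain : (k1 - n) ^ 2 ≤ (∑ i, c i * w i ^ 2) * k2 := le_trans hsq hcs
  have hle : ∑ i, c i * w i ^ 2 ≤ ∑ i, c i * ((v i : ℝ) ^ 2 - (v i : ℝ)) := by
    apply Finset.sum_le_sum
    intro i _
    apply mul_le_mul_of_nonneg_left _ (hc i).le
    have h1 : (1 : ℝ) ≤ (v i : ℝ) := by exact_mod_cast hv i
    simp only [hw]
    nlinarith
  rw [div_le_iff₀ (by linarith)]
  nlinarith [Finset.sum_nonneg (fun i (_ : i ∈ Finset.univ) => mul_nonneg (hc i).le (sq_nonneg (w i)))]
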